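/- arXiv:1107.0786 — 2 statements merged into one kernel-verified Lean document; each statement's English description precedes it below -/
import Mathlib

section
/- One-sided Lipschitz estimate for the macroscopic velocity: let μ be a nonnegative finite Borel measure on ℝ, S = S_μ, G = G_μ. Then the composed velocity field a ∘ G satisfies ∂_x(a(G)) ≤ c² sup|φ'| · S in the sense of distributions: for every nonnegative ψ ∈ C_c^∞(ℝ), −∫_ℝ a(G(x)) ψ'(x) dx ≤ c² (sup_ℝ |φ'|) ∫_ℝ S(x) ψ(x) dx, and consequently −∫_ℝ a(G(x)) ψ'(x) dx ≤ (c² (sup_ℝ |φ'|) μ(ℝ)/2) ∫_ℝ ψ(x) dx. -/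
open MeasureTheory

/-- The kernel `K(x) = (1/2) e^{-|x|}`. -/
noncomputable def Kker (x : ℝ) : ℝ := (1/2) * Real.exp (-|x|)

/-- The pointwise derivative `K'(x) = -(1/2) sgn(x) e^{-|x|}` (with `sgn 0 = 0`). -/
noncomputable def Kker' (x : ℝ) : ℝ := -(1/2) * Real.sign x * Real.exp (-|x|)

lemma Kker_nonneg (x : ℝ) : 0 ≤ Kker x := by
  unfold Kker; positivity

lemma Kker_le_half (x : ℝ) : Kker x ≤ 1/2 := by
  unfold Kker
  nlinarith [Real.exp_le_one_iff.2 (neg_nonpos.2 (abs_nonneg x)), Real.exp_pos (-|x|)]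

lemma Kker_continuous : Continuous Kker := by
  unfold Kker; fun_prop

lemma Kker'_abs_le (x : ℝ) : |Kker' x| ≤ 1/2 := by
  unfold Kker'
  rw [abs_mul, abs_mul]
  have h1 : |(-(1/2):ℝ)| = 1/2 := by norm_num
  have h2 : |Real.sign x| ≤ 1 := by
    rcases Real.sign_apply_eq x with h | h | h <;> simp [h]
  have h3 : |Real.exp (-|x|)| ≤ 1 := by
    rw [abs_of_nonneg (Real.exp_pos _).le]
    exact Real.exp_le_one_iff.2 (neg_nonpos.2 (abs_nonneg x))
  have h2' : 0 ≤ |Real.sign x| := abs_nonneg _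
  have h3' : 0 ≤ |Real.exp (-|x|)| := abs_nonneg _
  rw [h1]
  nlinarith

lemma Real.sign_measurable : Measurable Real.sign := by
  have : Real.sign = fun r : ℝ => if r < 0 then (-1:ℝ) else if 0 < r then 1 else 0 := by
    funext r; rfl
  rw [this]
  exact Measurable.ite (measurableSet_lt measurable_id measurable_const) measurable_const
    (Measurable.ite (measurableSet_lt measurable_const measurable_id) measurable_const
      measurable_const)

lemma Kker'_measurable : Measurable Kker' := by
  unfold Kker'
  exact (((measurable_const.mul Real.sign_measurable)).mul
    ((measurable_id.neg.comp _root_.continuous_abs.measurable).exp))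

lemma exp_le_exp_add (p q : ℝ) (hp : p ≤ 0) (hq : q ≤ 0) :
    Real.exp p ≤ Real.exp q + |p - q| := by
  rcases le_total p q with h | h
  · have h1 := Real.exp_le_exp.2 h
    have := abs_nonneg (p - q)
    linarith
  · have h1 : 1 - Real.exp (q - p) ≤ p - q := by linarith [Real.add_one_le_exp (q - p)]
    have h2 : Real.exp q = Real.exp p * Real.exp (q - p) := by
      rw [← Real.exp_add]; ring_nf
    have h3 : Real.exp p ≤ 1 := Real.exp_le_one_iff.2 hp
    have h4 : 0 < Real.exp p := Real.exp_pos p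
    have h5 : Real.exp (q - p) ≤ 1 := Real.exp_le_one_iff.2 (by linarith)
    have h6 : Real.exp p - Real.exp q ≤ p - q := by nlinarith
    have h7 : |p - q| = p - q := abs_of_nonneg (by linarith)
    linarith

lemma Kker_lip (u v : ℝ) : Kker u ≤ Kker v + (1/2) * |u - v| := by
  unfold Kker
  have h := exp_le_exp_add (-|u|) (-|v|) (neg_nonpos.2 (abs_nonneg u)) (neg_nonpos.2 (abs_nonneg v))
  have h2 : |(-|u|) - (-|v|)| ≤ |u - v| := by
    rw [show (-|u|) - (-|v|) = -(|u| - |v|) by ring, abs_neg]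
    exact abs_abs_sub_abs_le_abs_sub u v
  linarith

lemma Kker'_hasDerivAt {u : ℝ} (hu : u ≠ 0) : HasDerivAt Kker' (Kker u) u := by
  rcases hu.lt_or_gt with h | h
  · -- u < 0 : Kker' x = (1/2) * exp x near u
    have hd : HasDerivAt (fun x : ℝ => (1/2) * Real.exp x) ((1/2) * Real.exp u) u :=
      (Real.hasDerivAt_exp u).const_mul (1/2)
    have he : Kker' =ᶠ[nhds u] fun x : ℝ => (1/2) * Real.exp x := by
      filter_upwards [eventually_lt_nhds h] with x hx
      unfold Kker'
      rw [Real.sign_of_neg hx, abs_of_neg hx]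
      ring_nf
    have : Kker u = (1/2) * Real.exp u := by
      unfold Kker; rw [abs_of_neg h]; ring_nf
    rw [this]
    exact hd.congr_of_eventuallyEq he
  · -- 0 < u : Kker' x = -(1/2) * exp (-x) near u
    have hd : HasDerivAt (fun x : ℝ => -(1/2) * Real.exp (-x)) ((1/2) * Real.exp (-u)) u := by
      have h1 : HasDerivAt (fun x : ℝ => Real.exp (-x)) (Real.exp (-u) * (-1)) u :=
        (Real.hasDerivAt_exp (-u)).comp u ((hasDerivAt_id u).neg)
      have := h1.const_mul (-(1/2) : ℝ)
      convert this using 1 <;> first | rfl | ring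
    have he : Kker' =ᶠ[nhds u] fun x : ℝ => -(1/2) * Real.exp (-x) := by
      filter_upwards [eventually_gt_nhds h] with x hx
      unfold Kker'
      rw [Real.sign_of_pos hx, abs_of_pos hx]
      ring_nf
    have : Kker u = (1/2) * Real.exp (-u) := by
      unfold Kker; rw [abs_of_pos h]
    rw [this]
    exact hd.congr_of_eventuallyEq he

lemma Kker'_sub_le {x y : ℝ} (h : x ≤ y) : Kker' y - Kker' x ≤ ∫ s in x..y, Kker s := by
  have hint : IntervalIntegrable Kker volume x y := Kker_continuous.intervalIntegrable x y
  rcases lt_or_ge 0 x with hx | hx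
  · have : ∫ s in x..y, Kker s = Kker' y - Kker' x := by
      apply intervalIntegral.integral_eq_sub_of_hasDerivAt
      · intro u hu
        rw [Set.uIcc_of_le h] at hu
        exact Kker'_hasDerivAt (by linarith [hu.1] : u ≠ 0)
      · exact hint
    linarith [this.ge]
  · rcases lt_or_ge y 0 with hy | hy
    · have : ∫ s in x..y, Kker s = Kker' y - Kker' x := by
        apply intervalIntegral.integral_eq_sub_of_hasDerivAt
        · intro u hu
          rw [Set.uIcc_of_le h] at hu
          exact Kker'_hasDerivAt (by linarith [hu.2] : u ≠ 0)
        · exact hint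
      linarith [this.ge]
    · -- x ≤ 0 ≤ y
      have h1 : Kker' y ≤ 0 := by
        unfold Kker'
        rcases eq_or_lt_of_le hy with h' | h'
        · simp [← h', Real.sign_zero]
        · rw [Real.sign_of_pos h']
          nlinarith [Real.exp_pos (-|y|)]
      have h2 : 0 ≤ Kker' x := by
        unfold Kker'
        rcases eq_or_lt_of_le hx with h' | h'
        · simp [h', Real.sign_zero]
        · rw [Real.sign_of_neg h']
          nlinarith [Real.exp_pos (-|x|)]
      have h3 : 0 ≤ ∫ s in x..y, Kker s :=
        intervalIntegral.integral_nonneg h (fun s _ => Kker_nonneg s)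
      linarith

section Phi
variable {c α lam : ℝ} {φ : ℝ → ℝ}

lemma deriv_phi_eq_zero (hα : 0 < α) (hφ : ContDiff ℝ (⊤ : ℕ∞) φ)
    (hodd : ∀ x, φ (-x) = -φ x) (hsat : ∀ x, α < x → φ x = -lam) :
    ∀ x, α < |x| → deriv φ x = 0 := by
  intro x hx
  rcases lt_or_ge α x with h | h
  · have he : φ =ᶠ[nhds x] fun _ => -lam := by
      filter_upwards [eventually_gt_nhds h] with y hy
      exact hsat y hy
    rw [he.deriv_eq, deriv_const]
  · have hx' : x < -α := by
      rcases abs_cases x with ⟨h1, _⟩ | ⟨h1, _⟩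
      · linarith
      · linarith
    have he : φ =ᶠ[nhds x] fun _ => lam := by
      filter_upwards [eventually_lt_nhds hx'] with y hy
      have : φ (-y) = -lam := hsat (-y) (by linarith)
      have h2 := hodd y
      rw [this] at h2
      linarith [h2]
    rw [he.deriv_eq, deriv_const]

lemma bddAbove_abs_deriv_phi (hα : 0 < α) (hφ : ContDiff ℝ (⊤ : ℕ∞) φ)
    (hodd : ∀ x, φ (-x) = -φ x) (hsat : ∀ x, α < x → φ x = -lam) :
    BddAbove (Set.range fun x => |deriv φ x|) := by
  have hcs : HasCompactSupport (deriv φ) := by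
    apply HasCompactSupport.intro (isCompact_Icc : IsCompact (Set.Icc (-α) α))
    intro x hx
    apply deriv_phi_eq_zero hα hφ hodd hsat
    simp only [Set.mem_Icc, not_and_or, not_le] at hx
    rcases hx with h | h
    · rw [abs_of_neg (by linarith)]; linarith
    · rw [abs_of_pos (by linarith)]; linarith
  obtain ⟨C, hC⟩ := (hφ.continuous_deriv (by simp)).bounded_above_of_compact_support hcs
  exact ⟨C, by rintro y ⟨x, rfl⟩; simpa [Real.norm_eq_abs] using hC x⟩

lemma abs_deriv_phi_le (hα : 0 < α) (hφ : ContDiff ℝ (⊤ : ℕ∞) φ)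
    (hodd : ∀ x, φ (-x) = -φ x) (hsat : ∀ x, α < x → φ x = -lam) (x : ℝ) :
    |deriv φ x| ≤ ⨆ x : ℝ, |deriv φ x| :=
  le_ciSup (bddAbove_abs_deriv_phi hα hφ hodd hsat) x

lemma iSup_abs_deriv_phi_nonneg (hα : 0 < α) (hφ : ContDiff ℝ (⊤ : ℕ∞) φ)
    (hodd : ∀ x, φ (-x) = -φ x) (hsat : ∀ x, α < x → φ x = -lam) :
    0 ≤ ⨆ x : ℝ, |deriv φ x| :=
  le_trans (abs_nonneg _) (abs_deriv_phi_le hα hφ hodd hsat 0)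

lemma phi_abs_le (hα : 0 < α) (hφ : ContDiff ℝ (⊤ : ℕ∞) φ) (hmono : ∀ x, deriv φ x ≤ 0)
    (hodd : ∀ x, φ (-x) = -φ x) (hsat : ∀ x, α < x → φ x = -lam) (x : ℝ) :
    |φ x| ≤ |lam| := by
  have hanti : Antitone φ :=
    antitone_of_deriv_nonpos (hφ.differentiable (by simp)) hmono
  have h1 : φ x ≥ -lam := by
    have := hanti (le_of_lt (lt_add_one (max x α)) : max x α ≤ max x α + 1)
    have h2 : φ (max x α + 1) = -lam := hsat _ (by linarith [le_max_right x α, lt_add_one (max x α)])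
    have h3 : φ x ≥ φ (max x α) := hanti (le_max_left x α)
    calc φ x ≥ φ (max x α) := h3
      _ ≥ φ (max x α + 1) := hanti (by linarith)
      _ = -lam := h2
  have h2 : φ x ≤ lam := by
    have := h1
    have h4 : φ (-x) ≥ -lam := by
      have h3 : φ (-x) ≥ φ (max (-x) α) := hanti (le_max_left _ _)
      calc φ (-x) ≥ φ (max (-x) α) := h3
        _ ≥ φ (max (-x) α + 1) := hanti (by linarith)
        _ = -lam := hsat _ (by linarith [le_max_right (-x) α, lt_add_one (max (-x) α)])
    have := hodd x
    linarith
  rw [abs_le]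
  constructor
  · calc -|lam| ≤ -lam := by simp [le_abs_self]
      _ ≤ φ x := h1
  · exact le_trans h2 (le_abs_self lam)

/-- One-sided Lipschitz estimate for `a`. -/
lemma a_onesided (hc : 0 < c) (hα : 0 < α) (hφ : ContDiff ℝ (⊤ : ℕ∞) φ)
    (hmono : ∀ x, deriv φ x ≤ 0) (hodd : ∀ x, φ (-x) = -φ x)
    (hsat : ∀ x, α < x → φ x = -lam) {u v : ℝ} (huv : u ≤ v) :
    (-c * φ (c * v)) - (-c * φ (c * u)) ≤ c ^ 2 * (⨆ x : ℝ, |deriv φ x|) * (v - u) := by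
  rcases eq_or_lt_of_le huv with rfl | huv
  · simp
  · have hcv : c * u < c * v := by nlinarith
    obtain ⟨ξ, _, hξ⟩ := exists_hasDerivAt_eq_slope φ (deriv φ) hcv
      (hφ.continuous.continuousOn)
      (fun x _ => ((hφ.differentiable (by simp)) x).hasDerivAt)
    -- hξ : deriv φ ξ = (φ (c*v) - φ (c*u)) / (c*v - c*u)
    have hM := abs_deriv_phi_le hα hφ hodd hsat ξ
    have key : φ (c * u) - φ (c * v) = -(deriv φ ξ) * (c * v - c * u) := by
      have hne : c * v - c * u ≠ 0 := ne_of_gt (by linarith)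
      rw [eq_div_iff hne] at hξ
      linarith [hξ]
    have h0 : -(deriv φ ξ) ≤ ⨆ x : ℝ, |deriv φ x| := le_trans (neg_le_abs _) hM
    have h1 : (0:ℝ) ≤ c * v - c * u := by linarith
    calc (-c * φ (c * v)) - (-c * φ (c * u)) = c * (φ (c * u) - φ (c * v)) := by ring
      _ = c * (-(deriv φ ξ) * (c * v - c * u)) := by rw [key]
      _ ≤ c * ((⨆ x : ℝ, |deriv φ x|) * (c * v - c * u)) := by
          apply mul_le_mul_of_nonneg_left _ hc.le
          exact mul_le_mul_of_nonneg_right h0 h1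
      _ = c ^ 2 * (⨆ x : ℝ, |deriv φ x|) * (v - u) := by ring

lemma a_antitone_step (hc : 0 < c) (hφ : ContDiff ℝ (⊤ : ℕ∞) φ) (hmono : ∀ x, deriv φ x ≤ 0)
    {u v : ℝ} (huv : v ≤ u) : (-c * φ (c * v)) - (-c * φ (c * u)) ≤ 0 := by
  have hanti : Antitone φ := antitone_of_deriv_nonpos (hφ.differentiable (by simp)) hmono
  have := hanti (by nlinarith : c * v ≤ c * u)
  nlinarith

end Phi

lemma Kker'_sub_le' {b h : ℝ} (hh : 0 < h) :
    Kker' b - Kker' (b - h) ≤ h * Kker b + h ^ 2 / 2 := by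
  have h1 := Kker'_sub_le (show b - h ≤ b by linarith)
  have h2 : (∫ s in (b - h)..b, Kker s) ≤ ∫ s in (b - h)..b, (Kker b + h / 2) := by
    apply intervalIntegral.integral_mono_on (by linarith)
      (Kker_continuous.intervalIntegrable _ _) intervalIntegrable_const
    intro s hs
    have hl := Kker_lip s b
    have habs : |s - b| ≤ h := abs_le.2 ⟨by linarith [hs.1], by linarith [hs.2]⟩
    nlinarith
  have h3 : (∫ _s in (b - h)..b, (Kker b + h / 2 : ℝ)) = h * (Kker b + h / 2) := by
    rw [intervalIntegral.integral_const, smul_eq_mul]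
    ring_nf
  nlinarith

section Meas
variable (μ : Measure ℝ) [IsFiniteMeasure μ]

lemma Kker_integrable (x : ℝ) : Integrable (fun t => Kker (x - t)) μ := by
  have hm : Measurable fun t => Kker (x - t) :=
    Kker_continuous.measurable.comp (measurable_const.sub measurable_id)
  apply (integrable_const (1/2 : ℝ)).mono' hm.aestronglyMeasurable
  filter_upwards with t
  rw [Real.norm_eq_abs, abs_of_nonneg (Kker_nonneg _)]
  exact Kker_le_half _

lemma Kker'_integrable (x : ℝ) : Integrable (fun t => Kker' (x - t)) μ := by
  have hm : Measurable fun t => Kker' (x - t) :=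
    Kker'_measurable.comp (measurable_const.sub measurable_id)
  apply (integrable_const (1/2 : ℝ)).mono' hm.aestronglyMeasurable
  filter_upwards with t
  rw [Real.norm_eq_abs]
  exact Kker'_abs_le _

lemma S_nonneg' (x : ℝ) : 0 ≤ ∫ t, Kker (x - t) ∂μ :=
  integral_nonneg fun t => Kker_nonneg _

lemma S_le_half' (x : ℝ) : (∫ t, Kker (x - t) ∂μ) ≤ (μ Set.univ).toReal * (1/2) := by
  have := integral_mono (Kker_integrable μ x) (integrable_const (1/2 : ℝ))
    (fun t => Kker_le_half (x - t))
  rwa [integral_const, smul_eq_mul] at this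

lemma S_sub_le' (x y : ℝ) :
    (∫ t, Kker (x - t) ∂μ) ≤ (∫ t, Kker (y - t) ∂μ) + (μ Set.univ).toReal * ((1/2) * |x - y|) := by
  have h1 : (∫ t, Kker (x - t) ∂μ) ≤ ∫ t, (Kker (y - t) + (1/2) * |x - y|) ∂μ := by
    apply integral_mono (Kker_integrable μ x)
      ((Kker_integrable μ y).add (integrable_const _))
    intro t
    have := Kker_lip (x - t) (y - t)
    simpa [show x - t - (y - t) = x - y by ring] using this
  rwa [integral_add (Kker_integrable μ y) (integrable_const _), integral_const,
    smul_eq_mul] at h1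

lemma S_cont' : Continuous (fun x => ∫ t, Kker (x - t) ∂μ) := by
  apply LipschitzWith.continuous (K := Real.toNNReal ((μ Set.univ).toReal * (1/2)))
  apply LipschitzWith.of_dist_le_mul
  intro x y
  rw [Real.dist_eq, Real.dist_eq, Real.coe_toNNReal _ (by positivity)]
  have h1 := S_sub_le' μ x y
  have h2 := S_sub_le' μ y x
  rw [abs_sub_comm y x] at h2
  rw [abs_le]
  constructor <;> nlinarith [abs_nonneg (x - y), ENNReal.toReal_nonneg (a := μ Set.univ)]

lemma G_meas' : Measurable (fun x => ∫ t, Kker' (x - t) ∂μ) := by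
  have hsm : StronglyMeasurable (fun p : ℝ × ℝ => Kker' (p.1 - p.2)) :=
    (Kker'_measurable.comp (measurable_fst.sub measurable_snd)).stronglyMeasurable
  exact hsm.integral_prod_right'.measurable

lemma G_abs_le' (x : ℝ) : |∫ t, Kker' (x - t) ∂μ| ≤ (μ Set.univ).toReal * (1/2) := by
  have h := norm_integral_le_of_norm_le_const (C := 1/2)
    (μ := μ) (f := fun t => Kker' (x - t)) ?_
  · rw [Real.norm_eq_abs] at h
    calc |∫ t, Kker' (x - t) ∂μ| ≤ 1/2 * (μ Set.univ).toReal := by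
          simpa [Measure.restrict_univ, measureReal_def] using h
      _ = (μ Set.univ).toReal * (1/2) := by ring
  · filter_upwards with t
    rw [Real.norm_eq_abs]
    exact Kker'_abs_le _

lemma G_step' {h : ℝ} (hh : 0 < h) (x : ℝ) :
    (∫ t, Kker' (x - t) ∂μ) - (∫ t, Kker' (x - h - t) ∂μ) ≤
      h * (∫ t, Kker (x - t) ∂μ) + h ^ 2 / 2 * (μ Set.univ).toReal := by
  rw [← integral_sub (Kker'_integrable μ x) (Kker'_integrable μ (x - h))]
  have hmono : (∫ t, (Kker' (x - t) - Kker' (x - h - t)) ∂μ) ≤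
      ∫ t, (h * Kker (x - t) + h ^ 2 / 2) ∂μ := by
    apply integral_mono ((Kker'_integrable μ x).sub (Kker'_integrable μ (x - h)))
      (((Kker_integrable μ x).const_mul h).add (integrable_const _))
    intro t
    have := Kker'_sub_le' (b := x - t) hh
    simpa [show x - h - t = x - t - h by ring] using this
  rw [integral_add ((Kker_integrable μ x).const_mul h) (integrable_const _),
    integral_const_mul, integral_const, smul_eq_mul, measureReal_def] at hmono
  nlinarith [hmono]

end Meas

/-- One-sided Lipschitz estimate for the macroscopic velocity `a ∘ G_μ`: for every
nonnegative finite Borel measure `μ` and every nonnegative test function `ψ`,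
`-∫ a(G) ψ' ≤ c² sup|φ'| ∫ S ψ`, and consequently
`-∫ a(G) ψ' ≤ (c² sup|φ'| μ(ℝ)/2) ∫ ψ`. -/
theorem stmt4 (c α lam : ℝ) (hc : 0 < c) (hα : 0 < α) (hlam0 : 0 < lam) (hlam1 : lam < 1)
    (φ : ℝ → ℝ) (hφ : ContDiff ℝ (⊤ : ℕ∞) φ) (hodd : ∀ x, φ (-x) = -φ x)
    (hmono : ∀ x, deriv φ x ≤ 0) (hsat : ∀ x, α < x → φ x = -lam)
    (a : ℝ → ℝ) (ha : a = fun s => -c * φ (c * s))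
    (μ : Measure ℝ) [IsFiniteMeasure μ]
    (S G : ℝ → ℝ) (hS : S = fun x => ∫ y, Kker (x - y) ∂μ)
    (hG : G = fun x => ∫ y, Kker' (x - y) ∂μ) :
    ∀ ψ : ℝ → ℝ, ContDiff ℝ (⊤ : ℕ∞) ψ → HasCompactSupport ψ → (∀ x, 0 ≤ ψ x) →
      (-∫ x : ℝ, a (G x) * deriv ψ x) ≤
        c ^ 2 * (⨆ x : ℝ, |deriv φ x|) * ∫ x : ℝ, S x * ψ x ∧
      (-∫ x : ℝ, a (G x) * deriv ψ x) ≤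
        c ^ 2 * (⨆ x : ℝ, |deriv φ x|) * (μ Set.univ).toReal / 2 * ∫ x : ℝ, ψ x := by
  intro ψ hψsm hψc hψ0
  rw [ha, hS, hG]
  set A : ℝ → ℝ := fun s => -c * φ (c * s) with hA
  set Gf : ℝ → ℝ := fun x => ∫ y, Kker' (x - y) ∂μ with hGf
  set Sf : ℝ → ℝ := fun x => ∫ y, Kker (x - y) ∂μ with hSf
  set M : ℝ := ⨆ x : ℝ, |deriv φ x| with hM
  set μR : ℝ := (μ Set.univ).toReal with hμR
  have hM0 : 0 ≤ M := iSup_abs_deriv_phi_nonneg hα hφ hodd hsat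
  have hM'0 : 0 ≤ c ^ 2 * M := by positivity
  have hμR0 : 0 ≤ μR := ENNReal.toReal_nonneg
  -- continuity and measurability facts
  have hAcont : Continuous A := by
    rw [hA]
    exact continuous_const.mul (hφ.continuous.comp (continuous_const.mul continuous_id))
  have hGmeas : Measurable Gf := G_meas' μ
  have hAGmeas : AEStronglyMeasurable (fun x => A (Gf x)) volume :=
    ((hAcont.measurable).comp hGmeas).aestronglyMeasurable
  have hAGbd : ∀ x, ‖A (Gf x)‖ ≤ c * |lam| := by
    intro x
    rw [Real.norm_eq_abs, hA]
    simp only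
    rw [abs_mul, abs_neg, abs_of_pos hc]
    exact mul_le_mul_of_nonneg_left
      (phi_abs_le hα hφ hmono hodd hsat (c * Gf x)) hc.le
  -- test function facts
  have hψcont : Continuous ψ := hψsm.continuous
  have hψ'cont : Continuous (deriv ψ) := hψsm.continuous_deriv (by simp)
  have hψint : Integrable ψ volume := hψcont.integrable_of_hasCompactSupport hψc
  obtain ⟨Lψ, hLψ⟩ := hψ'cont.bounded_above_of_compact_support hψc.deriv
  have hLψ0 : 0 ≤ Lψ := le_trans (norm_nonneg _) (hLψ 0)
  have hψlipaux : ∀ u v : ℝ, u < v → |ψ v - ψ u| ≤ Lψ * |v - u| := by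
    intro u v h
    obtain ⟨ξ, _, hξ⟩ := exists_hasDerivAt_eq_slope ψ (deriv ψ) h hψcont.continuousOn
      (fun x _ => (hψsm.differentiable (by simp) x).hasDerivAt)
    have hne : v - u ≠ 0 := ne_of_gt (by linarith)
    rw [eq_div_iff hne] at hξ
    have : ψ v - ψ u = deriv ψ ξ * (v - u) := hξ.symm
    rw [this, abs_mul]
    exact mul_le_mul_of_nonneg_right
      (by simpa [Real.norm_eq_abs] using hLψ ξ) (abs_nonneg _)
  have hψlip : ∀ u v : ℝ, |ψ v - ψ u| ≤ Lψ * |v - u| := by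
    intro u v
    rcases lt_trichotomy u v with h | rfl | h
    · exact hψlipaux u v h
    · simp
    · have := hψlipaux v u h
      rw [abs_sub_comm (ψ u), abs_sub_comm u] at this
      exact this
  -- support radius
  obtain ⟨R, hR0, hRsub⟩ := hψc.isCompact.isBounded.subset_closedBall_lt 0 0
  have hψzero : ∀ x : ℝ, R < |x| → ψ x = 0 := by
    intro x hx
    apply image_eq_zero_of_notMem_tsupport
    intro hmem
    have := hRsub hmem
    rw [Metric.mem_closedBall, Real.dist_eq, sub_zero] at this
    linarith
  -- sequence
  set hn : ℕ → ℝ := fun n => 1 / ((n : ℝ) + 1) with hhn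
  have hn_pos : ∀ n, 0 < hn n := fun n => by positivity
  have hn_le : ∀ n, hn n ≤ 1 := by
    intro n
    rw [hhn]
    simp only
    rw [div_le_one (by positivity)]
    have : (0:ℝ) ≤ (n:ℝ) := Nat.cast_nonneg n
    linarith
  have hn_to : Filter.Tendsto hn Filter.atTop (nhds 0) :=
    tendsto_one_div_add_atTop_nhds_zero_nat
  -- integrability of the pieces
  have hI1 : Integrable (fun x => A (Gf x) * ψ x) volume :=
    hψint.bdd_mul (c := c * |lam|) hAGmeas (Filter.Eventually.of_forall hAGbd)
  have hIshift : ∀ d : ℝ, Integrable (fun x => A (Gf x) * ψ (x + d)) volume := by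
    intro d
    have hcs : HasCompactSupport fun x => ψ (x + d) :=
      hψc.comp_homeomorph (Homeomorph.addRight d)
    exact ((hψcont.comp (continuous_id.add continuous_const)).integrable_of_hasCompactSupport
      hcs).bdd_mul (c := c * |lam|) hAGmeas (Filter.Eventually.of_forall hAGbd)
  have hI2 : ∀ d : ℝ, Integrable (fun x => A (Gf (x - d)) * ψ x) volume := by
    intro d
    exact hψint.bdd_mul
      (((hAcont.measurable).comp (hGmeas.comp
        (measurable_id.sub measurable_const))).aestronglyMeasurable)
      (c := c * |lam|) (Filter.Eventually.of_forall fun x => hAGbd _)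
  -- Step 1 : dominated convergence
  have hstep1 : Filter.Tendsto (fun n => ∫ x, A (Gf x) * ((ψ x - ψ (x + hn n)) / hn n))
      Filter.atTop (nhds (∫ x, A (Gf x) * (-deriv ψ x))) := by
    apply tendsto_integral_of_dominated_convergence
      (bound := Set.indicator (Set.Icc (-(R+1)) (R+1)) (fun _ => (c * |lam|) * Lψ))
    · intro n
      exact hAGmeas.mul
        (((hψcont.sub (hψcont.comp (continuous_id.add continuous_const))).div_const
          _).aestronglyMeasurable)
    · rw [integrable_indicator_iff measurableSet_Icc]
      exact integrableOn_const measure_Icc_lt_top.ne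
    · intro n
      filter_upwards with x
      by_cases hx : x ∈ Set.Icc (-(R+1)) (R+1)
      · rw [Set.indicator_of_mem hx]
        have h1 : |ψ x - ψ (x + hn n)| ≤ Lψ * hn n := by
          have := hψlip (x + hn n) x
          rw [show x - (x + hn n) = -(hn n) by ring, abs_neg,
            abs_of_pos (hn_pos n)] at this
          exact this
        rw [Real.norm_eq_abs, abs_mul, abs_div, abs_of_pos (hn_pos n)]
        have h2 : |ψ x - ψ (x + hn n)| / hn n ≤ Lψ :=
          (div_le_iff₀ (hn_pos n)).2 (by linarith)
        exact mul_le_mul (by simpa [Real.norm_eq_abs] using hAGbd x) h2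
          (by positivity) (by positivity)
      · rw [Set.indicator_of_notMem hx]
        simp only [Set.mem_Icc, not_and_or, not_le] at hx
        have hzx : ψ x = 0 := by
          apply hψzero
          rcases hx with h | h
          · rw [abs_of_neg (by linarith)]; linarith
          · rw [abs_of_pos (by linarith)]; linarith
        have hzx2 : ψ (x + hn n) = 0 := by
          apply hψzero
          rcases hx with h | h
          · rw [abs_of_neg (by linarith [hn_le n])]; linarith [hn_le n]
          · rw [abs_of_pos (by linarith [hn_pos n])]; linarith [hn_pos n]
        simp [hzx, hzx2]
    · filter_upwards with x
      have hd := (hψsm.differentiable (by simp) x).hasDerivAt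
      have hslope := hasDerivAt_iff_tendsto_slope.mp hd
      have hseq : Filter.Tendsto (fun n => x + hn n) Filter.atTop (nhdsWithin x {x}ᶜ) := by
        rw [tendsto_nhdsWithin_iff]
        constructor
        · have h := hn_to.const_add x
          rw [add_zero] at h
          exact h
        · filter_upwards with n
          simp only [Set.mem_compl_iff, Set.mem_singleton_iff]
          linarith [hn_pos n]
      have hcomp : Filter.Tendsto (fun n => slope ψ x (x + hn n)) Filter.atTop
          (nhds (deriv ψ x)) := hslope.comp hseq
      have heq : ∀ n, A (Gf x) * ((ψ x - ψ (x + hn n)) / hn n)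
          = A (Gf x) * (-(slope ψ x (x + hn n))) := by
        intro n
        rw [slope_def_field, show x + hn n - x = hn n by ring]
        ring
      simp only [heq]
      exact (hcomp.neg).const_mul (A (Gf x))
  -- Step 2 : change of variables
  have hstep2 : ∀ n, (∫ x, A (Gf x) * ((ψ x - ψ (x + hn n)) / hn n))
      = ∫ x, ((A (Gf x) - A (Gf (x - hn n))) / hn n) * ψ x := by
    intro n
    have hne : hn n ≠ 0 := ne_of_gt (hn_pos n)
    have e1 : (∫ x, A (Gf (x - hn n)) * ψ x) = ∫ x, A (Gf x) * ψ (x + hn n) := by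
      calc (∫ x, A (Gf (x - hn n)) * ψ x)
          = ∫ x, (fun y => A (Gf y) * ψ (y + hn n)) (x - hn n) := by
            congr 1; funext x; simp [sub_add_cancel]
        _ = ∫ y, A (Gf y) * ψ (y + hn n) :=
            integral_sub_right_eq_self (μ := volume) (fun y => A (Gf y) * ψ (y + hn n)) (hn n)
    have e2 : (fun x => A (Gf x) * ((ψ x - ψ (x + hn n)) / hn n))
        = fun x => (1 / hn n) * (A (Gf x) * ψ x - A (Gf x) * ψ (x + hn n)) := by
      funext x; field_simp; try ring
    have e3 : (fun x => ((A (Gf x) - A (Gf (x - hn n))) / hn n) * ψ x)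
        = fun x => (1 / hn n) * (A (Gf x) * ψ x - A (Gf (x - hn n)) * ψ x) := by
      funext x; field_simp; try ring
    rw [e2, e3, integral_const_mul, integral_const_mul,
      integral_sub hI1 (hIshift (hn n)), integral_sub hI1 (hI2 (hn n)), e1]
  -- Step 3 : pointwise one-sided bound
  have hSψint : Integrable (fun x => Sf x * ψ x) volume :=
    ((S_cont' μ).mul hψcont).integrable_of_hasCompactSupport hψc.mul_left
  have hstep3 : ∀ n, (∫ x, ((A (Gf x) - A (Gf (x - hn n))) / hn n) * ψ x)
      ≤ c ^ 2 * M * (∫ x, Sf x * ψ x) + hn n * (c ^ 2 * M * μR * (∫ x, ψ x) / 2) := by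
    intro n
    have hpoint : ∀ x, ((A (Gf x) - A (Gf (x - hn n))) / hn n) * ψ x
        ≤ (c ^ 2 * M * (Sf x + hn n / 2 * μR)) * ψ x := by
      intro x
      apply mul_le_mul_of_nonneg_right _ (hψ0 x)
      rw [div_le_iff₀ (hn_pos n)]
      have hgs := G_step' μ (hn_pos n) x
      have hSx : 0 ≤ Sf x := S_nonneg' μ x
      rcases le_total (Gf (x - hn n)) (Gf x) with hle | hle
      · have h1 := a_onesided hc hα hφ hmono hodd hsat hle
        calc A (Gf x) - A (Gf (x - hn n))
            ≤ c ^ 2 * M * (Gf x - Gf (x - hn n)) := h1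
          _ ≤ c ^ 2 * M * (hn n * Sf x + (hn n) ^ 2 / 2 * μR) :=
              mul_le_mul_of_nonneg_left hgs hM'0
          _ = c ^ 2 * M * (Sf x + hn n / 2 * μR) * hn n := by ring
      · have h1 := a_antitone_step hc hφ hmono hle
        have h2 : 0 ≤ c ^ 2 * M * (Sf x + hn n / 2 * μR) * hn n := by
          apply mul_nonneg (mul_nonneg hM'0 _) (hn_pos n).le
          have := (hn_pos n).le
          nlinarith
        have h1' : A (Gf x) - A (Gf (x - hn n)) ≤ 0 := h1
        linarith
    have hLint : Integrable (fun x => ((A (Gf x) - A (Gf (x - hn n))) / hn n) * ψ x) volume := by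
      have e : (fun x => ((A (Gf x) - A (Gf (x - hn n))) / hn n) * ψ x)
          = fun x => (1 / hn n) * (A (Gf x) * ψ x - A (Gf (x - hn n)) * ψ x) := by
        funext x; field_simp; try ring
      rw [e]
      exact (hI1.sub (hI2 _)).const_mul _
    have hRint : Integrable (fun x => (c ^ 2 * M * (Sf x + hn n / 2 * μR)) * ψ x) volume := by
      apply Continuous.integrable_of_hasCompactSupport
      · exact (continuous_const.mul ((S_cont' μ).add continuous_const)).mul hψcont
      · exact hψc.mul_left
    have hmono' := integral_mono hLint hRint hpoint
    have e : (∫ x, (c ^ 2 * M * (Sf x + hn n / 2 * μR)) * ψ x)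
        = c ^ 2 * M * (∫ x, Sf x * ψ x) + hn n * (c ^ 2 * M * μR * (∫ x, ψ x) / 2) := by
      have e1 : (fun x => (c ^ 2 * M * (Sf x + hn n / 2 * μR)) * ψ x)
          = fun x => (c ^ 2 * M) * (Sf x * ψ x) + (c ^ 2 * M * (hn n / 2 * μR)) * ψ x := by
        funext x; ring
      rw [e1, integral_add (hSψint.const_mul _) (hψint.const_mul _),
        integral_const_mul, integral_const_mul]
      ring
    linarith [hmono', e.le, e.ge]
  -- Step 4 : limit of the bound
  have hstep4 : Filter.Tendsto
      (fun n => c ^ 2 * M * (∫ x, Sf x * ψ x) + hn n * (c ^ 2 * M * μR * (∫ x, ψ x) / 2))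
      Filter.atTop (nhds (c ^ 2 * M * (∫ x, Sf x * ψ x))) := by
    have h := (hn_to.mul_const (c ^ 2 * M * μR * (∫ x, ψ x) / 2)).const_add
      (c ^ 2 * M * (∫ x, Sf x * ψ x))
    rw [zero_mul, add_zero] at h
    exact h
  -- combine
  have hfinal : (∫ x, A (Gf x) * (-deriv ψ x)) ≤ c ^ 2 * M * (∫ x, Sf x * ψ x) := by
    apply le_of_tendsto_of_tendsto' hstep1 hstep4
    intro n
    rw [hstep2 n]
    exact hstep3 n
  have hneg : (∫ x, A (Gf x) * (-deriv ψ x)) = -∫ x, A (Gf x) * deriv ψ x := by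
    rw [← integral_neg]
    congr 1; funext x; ring
  constructor
  · linarith [hfinal, hneg.le, hneg.ge]
  · have h5 : (∫ x, Sf x * ψ x) ≤ (μR / 2) * ∫ x, ψ x := by
      have hpt : ∀ x, Sf x * ψ x ≤ (μR / 2) * ψ x := by
        intro x
        apply mul_le_mul_of_nonneg_right _ (hψ0 x)
        have := S_le_half' μ x
        rw [← hμR] at this
        linarith
      have := integral_mono hSψint (hψint.const_mul _) hpt
      rwa [integral_const_mul] at this
    have h6 : c ^ 2 * M * (∫ x, Sf x * ψ x) ≤ c ^ 2 * M * ((μR / 2) * ∫ x, ψ x) :=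
      mul_le_mul_of_nonneg_left h5 hM'0
    have h7 : c ^ 2 * M * ((μR / 2) * ∫ x, ψ x) = c ^ 2 * M * μR / 2 * ∫ x, ψ x := by ring
    linarith [hfinal, hneg.le, hneg.ge]
end

section
/- Finite-time collapse of two aggregates: let a : ℝ → ℝ be continuous, odd, nondecreasing, with a(s) > 0 for all s > 0, and A(x) = ∫_0^x a(s) ds. Let m_1, m_2 > 0 and let x_1, x_2 : [0,T] → ℝ be C¹ with x_1(t) < x_2(t) for all t ∈ [0,T], satisfying m_1 x_1'(t) = A(d_1(t) + m_1/2) − A(d_1(t) − m_1/2) and m_2 x_2'(t) = A(d_2(t) + m_2/2) − A(d_2(t) − m_2/2), where d_1(t) = (m_2/2) e^{x_1(t) − x_2(t)} and d_2(t) = −(m_1/2) e^{x_1(t) − x_2(t)}. Set g(t) = x_2(t) − x_1(t), v_1 = (1/m_1)[A(d_1(0) + m_1/2) − A(d_1(0) − m_1/2)] and v_2 = (1/m_2)[A(d_2(0) + m_2/2) − A(d_2(0) − m_2/2)]. Then v_1 − v_2 > 0 and g(t) ≤ g(0) − t·(v_1 − v_2) for all t ∈ [0,T]; in particular necessarily T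 ≤ g(0)/(v_1 − v_2), i.e. the two aggregates must collide no later than time g(0)/(v_1 − v_2). -/
/-!
The gap `g = x₂ - x₁` solves `g' = -R (exp (-g))`, where the collapse rate `R` is the sum of the
two central differences `(A (c + r) - A (c - r)) / m` of the antiderivative `A`. Oddness of `a`
makes `A` even, and `a > 0` makes `A` strictly increasing on `[0, ∞)`, so each central difference
is positive for `c > 0`; monotonicity of `a` makes it nondecreasing in `c`. Hence `g` decreases,
`exp (-g)` increases, and `g' ≤ -R (exp (-g 0)) = -(v₁ - v₂)` on `[0, T]`.
-/

open MeasureTheory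

noncomputable def Aanti (a : ℝ → ℝ) (x : ℝ) : ℝ := ∫ s in (0:ℝ)..x, a s

open Set

section Antiderivative

variable {a : ℝ → ℝ}

theorem Aanti_neg (haodd : ∀ s, a (-s) = -a s) (x : ℝ) : Aanti a (-x) = Aanti a x := by
  have h : ∫ s in (0:ℝ)..x, a (-s) = ∫ s in -x..-0, a s := intervalIntegral.integral_comp_neg a
  rw [funext haodd, intervalIntegral.integral_neg, neg_zero,
    intervalIntegral.integral_symm 0 (-x)] at h
  unfold Aanti
  linarith

theorem Aanti_abs (haodd : ∀ s, a (-s) = -a s) (x : ℝ) : Aanti a |x| = Aanti a x := by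
  rcases abs_choice x with h | h <;> rw [h]
  exact Aanti_neg haodd x

theorem hasDerivAt_Aanti (ha : Continuous a) (x : ℝ) : HasDerivAt (Aanti a) (a x) x :=
  (ha.integral_hasStrictDerivAt 0 x).hasDerivAt

theorem differentiable_Aanti (ha : Continuous a) : Differentiable ℝ (Aanti a) :=
  fun x => (hasDerivAt_Aanti ha x).differentiableAt

theorem strictMonoOn_Aanti (ha : Continuous a) (hapos : ∀ s > (0:ℝ), 0 < a s) :
    StrictMonoOn (Aanti a) (Ici 0) := by
  refine strictMonoOn_of_deriv_pos (convex_Ici 0)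
    (differentiable_Aanti ha).continuous.continuousOn fun x hx => ?_
  rw [interior_Ici] at hx
  rw [(hasDerivAt_Aanti ha x).deriv]
  exact hapos x hx

noncomputable def centralDiff (a : ℝ → ℝ) (c r : ℝ) : ℝ := Aanti a (c + r) - Aanti a (c - r)

theorem centralDiff_neg_left (haodd : ∀ s, a (-s) = -a s) (c r : ℝ) :
    centralDiff a (-c) r = -centralDiff a c r := by
  rw [centralDiff, centralDiff, show -c + r = -(c - r) by ring, show -c - r = -(c + r) by ring,
    Aanti_neg haodd, Aanti_neg haodd, neg_sub]

theorem centralDiff_pos (ha : Continuous a) (haodd : ∀ s, a (-s) = -a s)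
    (hapos : ∀ s > (0:ℝ), 0 < a s) {c r : ℝ} (hc : 0 < c) (hr : 0 < r) :
    0 < centralDiff a c r := by
  -- the part of `[c - r, c + r]` below `|c - r|` is symmetric about `0` and contributes nothing
  rw [centralDiff, ← Aanti_abs haodd (c - r), sub_pos]
  refine strictMonoOn_Aanti ha hapos (abs_nonneg (c - r)) (by simp only [mem_Ici]; linarith) ?_
  rw [abs_sub_lt_iff]
  constructor <;> linarith

theorem monotone_centralDiff (ha : Continuous a) (hamono : Monotone a) {r : ℝ} (hr : 0 ≤ r) :
    Monotone fun c => centralDiff a c r := by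
  have hderiv : ∀ c, HasDerivAt (fun c => centralDiff a c r) (a (c + r) - a (c - r)) c :=
    fun c => ((hasDerivAt_Aanti ha _).comp_add_const c r).sub
      ((hasDerivAt_Aanti ha _).comp_sub_const c r)
  refine monotone_of_deriv_nonneg (fun c => (hderiv c).differentiableAt) fun c => ?_
  rw [(hderiv c).deriv, sub_nonneg]
  exact hamono (by linarith)

end Antiderivative

section Collapse

variable {a : ℝ → ℝ} {m₁ m₂ : ℝ}

-- the closing speed `x₁' - x₂'` of two aggregates of masses `m₁, m₂` when `e = exp (x₁ - x₂)`
noncomputable def collapseRate (a : ℝ → ℝ) (m₁ m₂ e : ℝ) : ℝ :=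
  centralDiff a (m₂ / 2 * e) (m₁ / 2) / m₁ + centralDiff a (m₁ / 2 * e) (m₂ / 2) / m₂

theorem collapseRate_pos (ha : Continuous a) (haodd : ∀ s, a (-s) = -a s)
    (hapos : ∀ s > (0:ℝ), 0 < a s) (hm₁ : 0 < m₁) (hm₂ : 0 < m₂) {e : ℝ} (he : 0 < e) :
    0 < collapseRate a m₁ m₂ e :=
  add_pos (div_pos (centralDiff_pos ha haodd hapos (by positivity) (by positivity)) hm₁)
    (div_pos (centralDiff_pos ha haodd hapos (by positivity) (by positivity)) hm₂)

theorem monotone_collapseRate (ha : Continuous a) (hamono : Monotone a) (hm₁ : 0 ≤ m₁)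
    (hm₂ : 0 ≤ m₂) : Monotone (collapseRate a m₁ m₂) := fun e e' he => by
  have hc₁ : m₂ / 2 * e ≤ m₂ / 2 * e' := mul_le_mul_of_nonneg_left he (by positivity)
  have hc₂ : m₁ / 2 * e ≤ m₁ / 2 * e' := mul_le_mul_of_nonneg_left he (by positivity)
  exact add_le_add
    (div_le_div_of_nonneg_right (monotone_centralDiff ha hamono (by positivity) hc₁) hm₁)
    (div_le_div_of_nonneg_right (monotone_centralDiff ha hamono (by positivity) hc₂) hm₂)

theorem sub_eq_collapseRate (haodd : ∀ s, a (-s) = -a s) (hm₁ : m₁ ≠ 0) (hm₂ : m₂ ≠ 0)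
    {e u₁ u₂ : ℝ}
    (h₁ : m₁ * u₁ = Aanti a (m₂ / 2 * e + m₁ / 2) - Aanti a (m₂ / 2 * e - m₁ / 2))
    (h₂ : m₂ * u₂ = Aanti a (-(m₁ / 2) * e + m₂ / 2) - Aanti a (-(m₁ / 2) * e - m₂ / 2)) :
    u₁ - u₂ = collapseRate a m₁ m₂ e := by
  rw [← centralDiff, neg_mul, centralDiff_neg_left haodd] at h₂
  rw [← centralDiff] at h₁
  rw [collapseRate, ← h₁, ← neg_eq_iff_eq_neg.2 h₂]
  field_simp
  ring

end Collapse

theorem image_le_sub_mul_of_deriv_eq_neg_antitone {F g : ℝ → ℝ} {t₀ T t : ℝ}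
    (hg : Differentiable ℝ g) (hF : Antitone F) (hF₀ : ∀ y, 0 ≤ F y)
    (hderiv : ∀ s ∈ Icc t₀ T, deriv g s = -F (g s)) (ht : t ∈ Icc t₀ T) :
    g t ≤ g t₀ - (t - t₀) * F (g t₀) := by
  have ht₀ : t₀ ∈ Icc t₀ T := ⟨le_rfl, ht.1.trans ht.2⟩
  have hanti : AntitoneOn g (Icc t₀ T) := by
    refine antitoneOn_of_deriv_nonpos (convex_Icc t₀ T) hg.continuous.continuousOn
      hg.differentiableOn fun s hs => ?_
    rw [interior_Icc] at hs
    rw [hderiv s (Ioo_subset_Icc_self hs), neg_nonpos]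
    exact hF₀ _
  have := (convex_Icc t₀ T).image_sub_le_mul_sub_of_deriv_le hg.continuous.continuousOn
    hg.differentiableOn (C := -F (g t₀)) (fun s hs => ?_) t₀ ht₀ t ht ht.1
  · linarith
  rw [interior_Icc] at hs
  have hs' := Ioo_subset_Icc_self hs
  rw [hderiv s hs', neg_le_neg_iff]
  exact hF (hanti ht₀ hs' hs'.1)

/-- Finite-time collapse of two aggregates: for the two-aggregate ODE system with a
continuous, odd, nondecreasing velocity law `a` positive on positive reals, the gap
`g(t) = x₂(t) - x₁(t)` satisfies `g(t) ≤ g(0) - t (v₁ - v₂)` with `v₁ - v₂ > 0`; in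
particular the two aggregates must collide no later than time `g(0)/(v₁ - v₂)`, so
necessarily `T ≤ g(0)/(v₁ - v₂)`. -/
theorem stmt15 (a : ℝ → ℝ) (ha : Continuous a) (haodd : ∀ s, a (-s) = -a s)
    (hamono : Monotone a) (hapos : ∀ s > (0:ℝ), 0 < a s)
    (m₁ m₂ T : ℝ) (hm₁ : 0 < m₁) (hm₂ : 0 < m₂) (hT : 0 < T)
    (x₁ x₂ : ℝ → ℝ) (hreg₁ : ContDiff ℝ 1 x₁) (hreg₂ : ContDiff ℝ 1 x₂)
    (horder : ∀ t ∈ Set.Icc (0:ℝ) T, x₁ t < x₂ t)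
    (d₁ d₂ : ℝ → ℝ)
    (hd₁ : d₁ = fun t => (m₂ / 2) * Real.exp (x₁ t - x₂ t))
    (hd₂ : d₂ = fun t => -(m₁ / 2) * Real.exp (x₁ t - x₂ t))
    (hode₁ : ∀ t ∈ Set.Icc (0:ℝ) T,
      m₁ * deriv x₁ t = Aanti a (d₁ t + m₁ / 2) - Aanti a (d₁ t - m₁ / 2))
    (hode₂ : ∀ t ∈ Set.Icc (0:ℝ) T,
      m₂ * deriv x₂ t = Aanti a (d₂ t + m₂ / 2) - Aanti a (d₂ t - m₂ / 2))
    (v₁ v₂ : ℝ)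
    (hv₁ : v₁ = (1 / m₁) * (Aanti a (d₁ 0 + m₁ / 2) - Aanti a (d₁ 0 - m₁ / 2)))
    (hv₂ : v₂ = (1 / m₂) * (Aanti a (d₂ 0 + m₂ / 2) - Aanti a (d₂ 0 - m₂ / 2))) :
    0 < v₁ - v₂ ∧
    (∀ t ∈ Set.Icc (0:ℝ) T, x₂ t - x₁ t ≤ (x₂ 0 - x₁ 0) - t * (v₁ - v₂)) ∧
    T ≤ (x₂ 0 - x₁ 0) / (v₁ - v₂) := by
  subst hd₁ hd₂
  set F : ℝ → ℝ := fun y => collapseRate a m₁ m₂ (Real.exp (-y)) with hF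
  have hFanti : Antitone F := (monotone_collapseRate ha hamono hm₁.le hm₂.le).comp_antitone
    fun y y' h => Real.exp_le_exp.2 (neg_le_neg h)
  have hFpos (y : ℝ) : 0 < F y := collapseRate_pos ha haodd hapos hm₁ hm₂ (Real.exp_pos _)
  have hx₁ := hreg₁.differentiable one_ne_zero
  have hx₂ := hreg₂.differentiable one_ne_zero
  have hderiv : ∀ t ∈ Icc 0 T, deriv (fun t => x₂ t - x₁ t) t = -F (x₂ t - x₁ t) := by
    intro t ht
    simp only [deriv_fun_sub (hx₂ t) (hx₁ t), hF, neg_sub]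
    rw [← sub_eq_collapseRate haodd hm₁.ne' hm₂.ne' (hode₁ t ht) (hode₂ t ht), neg_sub]
  have hv : v₁ - v₂ = F (x₂ 0 - x₁ 0) := by
    simp only [hF, neg_sub]
    refine sub_eq_collapseRate haodd hm₁.ne' hm₂.ne' ?_ ?_
    · rw [hv₁]; field_simp
    · rw [hv₂]; field_simp
  have hgap (t : ℝ) (ht : t ∈ Icc 0 T) : x₂ t - x₁ t ≤ (x₂ 0 - x₁ 0) - t * (v₁ - v₂) := by
    simpa [hv] using image_le_sub_mul_of_deriv_eq_neg_antitone (hx₂.sub hx₁) hFanti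
      (fun y => (hFpos y).le) hderiv ht
  have hpos : 0 < v₁ - v₂ := hv ▸ hFpos _
  refine ⟨hpos, hgap, ?_⟩
  have hT' : T ∈ Icc 0 T := ⟨hT.le, le_rfl⟩
  rw [le_div_iff₀ hpos]
  linarith [hgap T hT', horder T hT']
end
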